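/- The index of L equals k: the minimum over all χ ∈ L* of the dimension of the coadjoint stabilizer L_χ is exactly k. -/

import Mathlib

universe u v w

open Module

/-!
With `c` the `D`-coordinate, the bracket of `L` is `⁅X, Y⁆ = c X • ⁅D, Y⁆ - c Y • ⁅D, X⁆`.
Hence `χ ⁅X, ·⁆` vanishes as soon as `c X = 0` and `χ ⁅D, X⁆ = 0`, so `L_χ` contains a subspace of
codimension at most `2` and `dim L_χ ≥ k`. If `χ ⁅D, x⁆ ≠ 0` for some `x` (e.g. `χ = x₁*`,
`x = x₁`), pairing with `D` and `x` gives back these two conditions, and they are independent,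
so `dim L_χ = k`.
-/

/-- The coadjoint stabilizer `g_χ = {X ∈ g : χ([X,Y]) = 0 for all Y ∈ g}` of a linear
functional `χ` on a Lie algebra `g`, as a linear subspace of `g`. -/
def coadjointStabilizer (𝕜 : Type u) [Field 𝕜] (g : Type v) [LieRing g] [LieAlgebra 𝕜 g]
    (χ : Module.Dual 𝕜 g) : Submodule 𝕜 g where
  carrier := {X | ∀ Y : g, χ ⁅X, Y⁆ = 0}
  add_mem' := by intro a b ha hb; intro Y; rw [add_lie, map_add, ha Y, hb Y, add_zero]
  zero_mem' := by intro Y; rw [zero_lie, map_zero]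
  smul_mem' := by intro c a ha; intro Y; rw [smul_lie, map_smul, ha Y, smul_zero]

/-- The index of a Lie algebra: the minimum over `χ ∈ g*` of the dimension of the
coadjoint stabilizer `g_χ`. -/
noncomputable def lieIndex (𝕜 : Type u) [Field 𝕜] (g : Type v) [LieRing g]
    [LieAlgebra 𝕜 g] : ℕ :=
  ⨅ χ : Module.Dual 𝕜 g, Module.finrank 𝕜 (coadjointStabilizer 𝕜 g χ)

/-- `b` is a basis of the Lie algebra `L` of the paper: `Sum.inl i ↦ x_{i+1}`
(for `i : Fin k`), `Sum.inr 0 ↦ D_0`, `Sum.inr 1 ↦ D`, where `D_0` is central, the `x_i`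
commute, `[D, x_i] = x_i` for `i = 1, …, k-2`, `[D, x_{k-1}] = x_k` and `[D, x_k] = 0`. -/
def IsLBasis {𝕜 : Type u} [Field 𝕜] {L : Type v} [LieRing L] [LieAlgebra 𝕜 L]
    {k : ℕ} (b : Basis (Fin k ⊕ Fin 2) 𝕜 L) : Prop :=
  (∀ i j : Fin k, ⁅b (Sum.inl i), b (Sum.inl j)⁆ = 0) ∧
  (∀ v : Fin k ⊕ Fin 2, ⁅b (Sum.inr 0), b v⁆ = 0) ∧
  (∀ i : Fin k, (i : ℕ) < k - 2 → ⁅b (Sum.inr 1), b (Sum.inl i)⁆ = b (Sum.inl i)) ∧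
  (∀ i j : Fin k, (i : ℕ) = k - 2 → (j : ℕ) = k - 1 →
      ⁅b (Sum.inr 1), b (Sum.inl i)⁆ = b (Sum.inl j)) ∧
  (∀ i : Fin k, (i : ℕ) = k - 1 → ⁅b (Sum.inr 1), b (Sum.inl i)⁆ = 0)

namespace LieAlgebra

variable {𝕜 : Type u} [Field 𝕜] {g : Type v} [LieRing g] [LieAlgebra 𝕜 g]

section BracketThroughAd

variable {c : Module.Dual 𝕜 g} {D : g}

lemma prod_comp_ad_surjective (hcD : c D = 1) {χ : Module.Dual 𝕜 g} {x : g} (hx : χ ⁅D, x⁆ ≠ 0) :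
    Function.Surjective (c.prod (χ ∘ₗ ad 𝕜 g D)) := by
  rintro ⟨s, t⟩
  set r := t / χ ⁅D, x⁆
  refine ⟨r • x + (s - r * c x) • D, Prod.ext ?_ ?_⟩
  · simp [hcD]
  · simp [r, hx]

variable (hlie : ∀ X Y : g, ⁅X, Y⁆ = c X • ⁅D, Y⁆ - c Y • ⁅D, X⁆)
include hlie

lemma ker_prod_le_coadjointStabilizer (χ : Module.Dual 𝕜 g) :
    LinearMap.ker (c.prod (χ ∘ₗ ad 𝕜 g D)) ≤ coadjointStabilizer 𝕜 g χ := by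
  intro X hX Y
  simp only [LinearMap.mem_ker, LinearMap.prod_apply, Function.prod_apply, LinearMap.comp_apply,
    ad_apply, Prod.mk_eq_zero] at hX
  simp [hlie X Y, hX.1, hX.2]

lemma coadjointStabilizer_le_ker_prod (hcD : c D = 1) {χ : Module.Dual 𝕜 g} {x : g}
    (hx : χ ⁅D, x⁆ ≠ 0) :
    coadjointStabilizer 𝕜 g χ ≤ LinearMap.ker (c.prod (χ ∘ₗ ad 𝕜 g D)) := by
  intro X hX
  have hXD : χ ⁅D, X⁆ = 0 := by
    have := hX D
    rwa [hlie X D, lie_self, hcD, smul_zero, zero_sub, one_smul, map_neg, neg_eq_zero] at this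
  have hcX : c X = 0 := by
    have := hX x
    rwa [hlie X x, map_sub, map_smul, map_smul, hXD, smul_zero, sub_zero, smul_eq_mul,
      mul_eq_zero, or_iff_left hx] at this
  simp [hcX, hXD]

variable [FiniteDimensional 𝕜 g]

lemma finrank_le_finrank_coadjointStabilizer_add_two (χ : Module.Dual 𝕜 g) :
    finrank 𝕜 g ≤ finrank 𝕜 (coadjointStabilizer 𝕜 g χ) + 2 := by
  have hker := Submodule.finrank_mono (ker_prod_le_coadjointStabilizer hlie χ)
  have hrange : finrank 𝕜 (LinearMap.range (c.prod (χ ∘ₗ ad 𝕜 g D))) ≤ 2 :=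
    (Submodule.finrank_le _).trans_eq (by simp)
  have := LinearMap.finrank_range_add_finrank_ker (c.prod (χ ∘ₗ ad 𝕜 g D))
  omega

lemma finrank_coadjointStabilizer_add_two_eq (hcD : c D = 1) {χ : Module.Dual 𝕜 g} {x : g}
    (hx : χ ⁅D, x⁆ ≠ 0) : finrank 𝕜 (coadjointStabilizer 𝕜 g χ) + 2 = finrank 𝕜 g := by
  have hstab : coadjointStabilizer 𝕜 g χ = LinearMap.ker (c.prod (χ ∘ₗ ad 𝕜 g D)) :=
    (coadjointStabilizer_le_ker_prod hlie hcD hx).antisymm (ker_prod_le_coadjointStabilizer hlie χ)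
  have hrange : finrank 𝕜 (LinearMap.range (c.prod (χ ∘ₗ ad 𝕜 g D))) = 2 := by
    rw [LinearMap.range_eq_top.mpr (prod_comp_ad_surjective hcD hx), finrank_top]; simp
  have := LinearMap.finrank_range_add_finrank_ker (c.prod (χ ∘ₗ ad 𝕜 g D))
  rw [hstab]
  omega

lemma lieIndex_add_two_eq_finrank (hcD : c D = 1) {x : g} (hx : ⁅D, x⁆ ≠ 0) :
    lieIndex 𝕜 g + 2 = finrank 𝕜 g := by
  obtain ⟨χ, hχ⟩ := Module.Projective.exists_dual_eq_one 𝕜 hx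
  have hχ₀ := finrank_coadjointStabilizer_add_two_eq hlie hcD (hχ ▸ one_ne_zero : χ ⁅D, x⁆ ≠ 0)
  have hle : lieIndex 𝕜 g ≤ finrank 𝕜 (coadjointStabilizer 𝕜 g χ) :=
    ciInf_le (OrderBot.bddBelow _) χ
  have hge : finrank 𝕜 g - 2 ≤ lieIndex 𝕜 g := le_ciInf fun χ' ↦ by
    have := finrank_le_finrank_coadjointStabilizer_add_two hlie χ'
    omega
  omega

end BracketThroughAd

end LieAlgebra

open LieAlgebra

lemma IsLBasis.lie_eq {𝕜 : Type u} [Field 𝕜] {L : Type v} [LieRing L] [LieAlgebra 𝕜 L]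
    {k : ℕ} {b : Basis (Fin k ⊕ Fin 2) 𝕜 L} (hb : IsLBasis b) (X Y : L) :
    ⁅X, Y⁆ = b.coord (Sum.inr 1) X • ⁅b (Sum.inr 1), Y⁆
      - b.coord (Sum.inr 1) Y • ⁅b (Sum.inr 1), X⁆ := by
  obtain ⟨hxx, hD₀, -, -, -⟩ := hb
  set B := (b.coord (Sum.inr 1)).smulRight (ad 𝕜 L (b (Sum.inr 1)))
  suffices h : (ad 𝕜 L : L →ₗ[𝕜] Module.End 𝕜 L) = B - B.flip by
    simpa [B] using LinearMap.congr_fun₂ h X Y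
  refine LinearMap.ext_basis b b fun u v ↦ ?_
  simp only [LinearMap.sub_apply, LinearMap.flip_apply, LinearMap.smulRight_apply, B,
    LieHom.coe_toLinearMap, ad_apply, Basis.coord_apply, Basis.repr_self, Finsupp.single_apply]
  have hD₀' : ∀ v, ⁅b v, b (Sum.inr 0)⁆ = 0 := fun v ↦ by rw [← lie_skew, hD₀, neg_zero]
  split_ifs with hu hv hv
  · simp [hu, hv]
  · simp [hu]
  · rw [hv, ← lie_skew]; simp
  · rcases u with i | s <;> rcases v with j | t
    · simp [hxx]
    · fin_cases t <;> simp_all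
    · fin_cases s <;> simp_all
    · fin_cases s <;> fin_cases t <;> simp_all

theorem stmt2 (k : ℕ) (hk : 3 ≤ k)
    (𝕜 : Type u) [Field 𝕜]
    (L : Type v) [LieRing L] [LieAlgebra 𝕜 L]
    (b : Basis (Fin k ⊕ Fin 2) 𝕜 L) (hb : IsLBasis b) :
    lieIndex 𝕜 L = k := by
  have : FiniteDimensional 𝕜 L := Module.Finite.of_basis b
  have hdim : finrank 𝕜 L = k + 2 := by simp [Module.finrank_eq_card_basis b]
  have hcD : b.coord (Sum.inr 1) (b (Sum.inr 1)) = 1 := by simp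
  have hDx : ⁅b (Sum.inr 1), b (Sum.inl ⟨0, by omega⟩)⁆ ≠ 0 := by
    rw [hb.2.2.1 _ (show 0 < k - 2 by omega)]
    exact b.ne_zero _
  have := lieIndex_add_two_eq_finrank hb.lie_eq hcD hDx
  omega
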